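/- Let φ be the morphism φ(0)=001, φ(1)=1 and x = φ^ω(0). For every k ≥ 0, x begins with the square zz where z = φ^k(0), and |φ^k(0)| = 2^{k+1} − 1. -/

import Mathlib

/-- The morphism φ(0)=001, φ(1)=1. -/
def pmor (b : ℕ) : List ℕ := if b = 0 then [0, 0, 1] else [1]

/-- The iterates φ^k(0) as finite words: pword k = φ^k(0). -/
def pword : ℕ → List ℕ
  | 0 => [0]
  | (k + 1) => (pword k).flatMap pmor

/-- The fixed point x = φ^ω(0): the i-th letter of any sufficiently long
iterate φ^k(0). -/
def pfix (i : ℕ) : ℕ := (pword (i + 1)).getD i 0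

/-! Since φ(0) = 001 and φ fixes 1, φ^(k+1)(0) = φ^k(0) φ^k(0) 1. Hence every iterate is a prefix
of the next, so they all agree with x where defined, and φ^(k+1)(0) begins with the square
φ^k(0) φ^k(0); the length recursion n ↦ 2n + 1 gives |φ^k(0)| = 2^(k+1) − 1. -/

lemma pword_succ (k : ℕ) : pword (k + 1) = pword k ++ pword k ++ [1] := by
  induction k with
  | zero => rfl
  | succ k ih =>
    change (pword (k + 1)).flatMap pmor =
      (pword k).flatMap pmor ++ (pword k).flatMap pmor ++ [1]
    rw [ih, List.flatMap_append, List.flatMap_append]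
    rfl

lemma length_pword (k : ℕ) : (pword k).length = 2 ^ (k + 1) - 1 := by
  induction k with
  | zero => rfl
  | succ k ih =>
    rw [pword_succ, List.length_append, List.length_append, ih, pow_succ 2 (k + 1)]
    have := Nat.one_le_two_pow (n := k + 1)
    simp only [List.length_singleton]
    omega

lemma lt_length_pword_self (i : ℕ) : i < (pword i).length := by
  rw [length_pword]
  have := Nat.lt_two_pow_self (n := i + 1)
  omega

lemma pword_prefix_pword_succ (k : ℕ) : pword k <+: pword (k + 1) := by
  rw [pword_succ, List.append_assoc]
  exact List.prefix_append _ _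

lemma pword_prefix_of_le {k m : ℕ} (h : k ≤ m) : pword k <+: pword m :=
  Nat.le_induction (List.prefix_refl _) (fun n _ ih => ih.trans (pword_prefix_pword_succ n)) m h

lemma getElem_pword_eq {k m i : ℕ} (hk : i < (pword k).length) (hm : i < (pword m).length) :
    (pword k)[i] = (pword m)[i] := by
  rcases le_total k m with h | h
  · exact (pword_prefix_of_le h).getElem hk
  · exact ((pword_prefix_of_le h).getElem hm).symm

lemma map_pfix_range_of_prefix {w : List ℕ} {m : ℕ} (h : w <+: pword m) :
    (List.range w.length).map pfix = w := by
  refine List.ext_getElem (by simp) fun i _ hw => ?_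
  have hm : i < (pword m).length := lt_of_lt_of_le hw h.length_le
  have hi : i < (pword (i + 1)).length :=
    lt_of_lt_of_le (lt_length_pword_self i) (pword_prefix_pword_succ i).length_le
  rw [List.getElem_map, List.getElem_range, pfix, List.getD_eq_getElem _ _ hi,
    getElem_pword_eq hi hm, h.getElem hw]

theorem pfix_initial_square (k : ℕ) :
    (List.range (2 * (pword k).length)).map pfix = pword k ++ pword k ∧
    (pword k).length = 2 ^ (k + 1) - 1 := by
  have hsquare : pword k ++ pword k <+: pword (k + 1) := by
    rw [pword_succ]
    exact List.prefix_append _ _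
  refine ⟨?_, length_pword k⟩
  rw [two_mul, ← List.length_append]
  exact map_pfix_range_of_prefix hsquare
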